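/- arXiv:1610.02578 — 6 statements merged into one kernel-verified Lean document; each statement's English description precedes it below -/
import Mathlib

section
/- In any t-defect correcting design over an alphabet of size q >= 2, any two left vertices of degree exactly t have disjoint neighborhoods. -/
/-! A left vertex of degree exactly `t` must receive its own colour on every one of its
neighbours. Colour `i` and `i'` differently: a common neighbour would need both colours. -/

open Finset

/-- A bipartite graph `A : K → M → Bool` is a `t`-defect correcting design over an
alphabet of size `q` if for every `q`-coloring of the left vertices there is a
`q`-coloring of the right vertices such that every left vertex has at least `t`
same-colored right-neighbors. -/
def Correcting (q t : ℕ) {K M : Type*} [Fintype K] [Fintype M]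
    (A : K → M → Bool) : Prop :=
  ∀ c : K → Fin q, ∃ r : M → Fin q, ∀ i : K,
    t ≤ (Finset.univ.filter (fun j : M => A i j ∧ r j = c i)).card

/-- Degree of a left vertex. -/
def ldeg {K M : Type*} [Fintype K] [Fintype M] (A : K → M → Bool) (i : K) : ℕ :=
  (Finset.univ.filter (fun j : M => A i j)).card

/-- Total number of edges. -/
def edges {K M : Type*} [Fintype K] [Fintype M] (A : K → M → Bool) : ℕ :=
  ∑ i : K, ldeg A i

section

variable {K M : Type*} [Fintype K] [Fintype M] {A : K → M → Bool}

theorem forall_neighbor_color_eq_of_ldeg_le {q t : ℕ} {c : K → Fin q} {r : M → Fin q} {k : K}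
    (hr : t ≤ #(univ.filter fun j : M => A k j ∧ r j = c k)) (hk : ldeg A k ≤ t)
    {j : M} (hj : A k j) : r j = c k := by
  rw [← filter_filter] at hr
  have hall : ∀ j ∈ univ.filter fun j : M => A k j, r j = c k :=
    card_filter_eq_iff.mp (le_antisymm (card_filter_le _ _) (hk.trans hr))
  exact hall j (by simpa using hj)

theorem Correcting.exists_forced_coloring {q t : ℕ} (h : Correcting q t A) (c : K → Fin q) :
    ∃ r : M → Fin q, ∀ k, ldeg A k ≤ t → ∀ j, A k j → r j = c k := by
  obtain ⟨r, hr⟩ := h c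
  exact ⟨r, fun k hk _ hj => forall_neighbor_color_eq_of_ldeg_le (hr k) hk hj⟩

end

/-- In any `t`-defect correcting design over an alphabet of size `q ≥ 2`,
two distinct left vertices of degree exactly `t` have disjoint neighborhoods. -/
theorem degree_t_disjoint_neighborhoods {K M : Type*} [Fintype K] [Fintype M]
    {q t : ℕ} (hq : 2 ≤ q) (A : K → M → Bool) (h : Correcting q t A)
    (i i' : K) (hne : i ≠ i') (hi : ldeg A i = t) (hi' : ldeg A i' = t) :
    ∀ j : M, ¬(A i j ∧ A i' j) := by
  classical
  rintro j ⟨hij, hi'j⟩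
  let c : K → Fin q := fun k => if k = i then ⟨0, by omega⟩ else ⟨1, hq⟩
  obtain ⟨r, hr⟩ := h.exists_forced_coloring c
  have hcolor : c i = c i' := (hr i hi.le j hij).symm.trans (hr i' hi'.le j hi'j)
  simp [c, hne.symm, Fin.ext_iff] at hcolor
end

section
/- If k <= q, then every t-defect correcting design on k left vertices over an alphabet of size q has at least k*t edges, and moreover any such design in which every left vertex has degree exactly t must have all left-neighborhoods pairwise disjoint (i.e., it contains k disjoint copies of K(1,t)). -/
/-!
Colour the left vertices injectively, which `k ≤ q` allows, and take the right colouring the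
design provides. Every left vertex then has at least `t` neighbours of its own colour, so its degree
is at least `t`. If its degree is exactly `t`, all of its neighbours carry its colour, so a common
neighbour of two distinct left vertices would carry two distinct colours.
-/

open Finset

section

variable {K M : Type*} [Fintype M]

lemma filter_and_subset_neighbors (A : K → M → Bool) (i : K) (p : M → Prop)
    [DecidablePred p] :
    univ.filter (fun j => A i j ∧ p j) ⊆ univ.filter (fun j => A i j) :=
  monotone_filter_right univ fun _ _ hj => hj.1

lemma card_filter_and_le_ldeg [Fintype K] (A : K → M → Bool) (i : K) (p : M → Prop)
    [DecidablePred p] :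
    #{j | A i j ∧ p j} ≤ ldeg A i :=
  card_le_card (filter_and_subset_neighbors A i p)

lemma forall_of_ldeg_le_card_filter_and [Fintype K] (A : K → M → Bool) (i : K) (p : M → Prop)
    [DecidablePred p] (h : ldeg A i ≤ #{j | A i j ∧ p j}) (j : M) (hj : A i j) : p j := by
  have hfilter : univ.filter (fun j => A i j ∧ p j) = univ.filter (fun j => A i j) :=
    eq_of_subset_of_card_le (filter_and_subset_neighbors A i p) h
  have hmem : j ∈ univ.filter (fun j => A i j ∧ p j) := by simp [hfilter, hj]
  exact (mem_filter.mp hmem).2.2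

lemma card_mul_le_edges [Fintype K] {A : K → M → Bool} {t : ℕ} (h : ∀ i, t ≤ ldeg A i) :
    Fintype.card K * t ≤ edges A :=
  calc Fintype.card K * t = ∑ _i : K, t := by simp
    _ ≤ ∑ i : K, ldeg A i := sum_le_sum fun i _ => h i

end

/-- If `k ≤ q`, every `t`-defect correcting design on `k` left vertices over an
alphabet of size `q` has at least `k * t` edges, and if moreover every left vertex
has degree exactly `t` then all left-neighborhoods are pairwise disjoint
(i.e. the design contains `k` disjoint copies of `K(1,t)`). -/
theorem repetition_forced {K M : Type*} [Fintype K] [Fintype M] {q t : ℕ}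
    (hkq : Fintype.card K ≤ q) (A : K → M → Bool) (h : Correcting q t A) :
    Fintype.card K * t ≤ edges A ∧
      ((∀ i : K, ldeg A i = t) →
        ∀ i i' : K, i ≠ i' → ∀ j : M, ¬(A i j ∧ A i' j)) := by
  obtain ⟨c⟩ := Function.Embedding.nonempty_of_card_le (hkq.trans_eq (Fintype.card_fin q).symm)
  obtain ⟨r, hr⟩ := h c
  refine ⟨card_mul_le_edges fun i => (hr i).trans (card_filter_and_le_ldeg A i _), ?_⟩
  intro hdeg i i' hne j ⟨hij, hi'j⟩
  have hcolor : ∀ i j, A i j → r j = c i := fun i =>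
    forall_of_ldeg_le_card_filter_and A i _ ((hdeg i).trans_le (hr i))
  exact hne (c.injective ((hcolor i j hij).symm.trans (hcolor i' j hi'j)))
end

section
/- Over a binary alphabet, any 1-defect correcting design on k left vertices with E edges and m right vertices satisfies E >= 2k - m. -/
/-!
Colouring every left vertex alike shows that each left vertex has a neighbour. A left vertex of
degree one must share the colour of its unique neighbour, so if two of them had the same
neighbour, colouring them differently would leave one unserved; hence the degree-one vertices
inject into the right side. Charging two to every left vertex, a vertex of degree at least two
pays with its own edges, and a degree-one vertex with its edge and its private right neighbour.
-/

open Finset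

section

variable {K M : Type*} [Fintype K] [Fintype M] {A : K → M → Bool}

def leaves (A : K → M → Bool) : Finset K :=
  univ.filter (fun i => ldeg A i = 1)

lemma eq_of_adj_of_ldeg_le_one {i : K} {j j' : M} (hi : ldeg A i ≤ 1) (hj : A i j)
    (hj' : A i j') : j = j' :=
  card_le_one.mp hi j (by simpa using hj) j' (by simpa using hj')

namespace Correcting

lemma le_ldeg {q t : ℕ} [NeZero q] (h : Correcting q t A) (i : K) : t ≤ ldeg A i := by
  obtain ⟨r, hr⟩ := h (fun _ => 0)
  refine (hr i).trans (card_le_card fun j => ?_)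
  simp only [mem_filter, mem_univ, true_and]
  exact And.left

lemma eq_of_adj_of_mem_leaves {q : ℕ} (h : Correcting q 1 A) (hq : 1 < q) {i₁ i₂ : K} {j : M}
    (h₁ : i₁ ∈ leaves A) (h₂ : i₂ ∈ leaves A) (hj₁ : A i₁ j) (hj₂ : A i₂ j) : i₁ = i₂ := by
  classical
  by_contra hne
  let c : K → Fin q := fun i => if i = i₁ then ⟨0, by omega⟩ else ⟨1, hq⟩
  obtain ⟨r, hr⟩ := h c
  have colour_eq : ∀ i ∈ leaves A, A i j → r j = c i := by
    intro i hi hij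
    obtain ⟨j', hj'⟩ := card_pos.mp (hr i)
    simp only [mem_filter, mem_univ, true_and] at hj'
    simp only [leaves, mem_filter, mem_univ, true_and] at hi
    rw [eq_of_adj_of_ldeg_le_one hi.le hij hj'.1]
    exact hj'.2
  have hc : c i₁ = c i₂ := (colour_eq i₁ h₁ hj₁).symm.trans (colour_eq i₂ h₂ hj₂)
  simp [c, Ne.symm hne] at hc

lemma card_leaves_le {q : ℕ} (h : Correcting q 1 A) (hq : 1 < q) :
    #(leaves A) ≤ Fintype.card M := by
  have : NeZero q := ⟨by omega⟩
  refine card_le_card_of_forall_subsingleton (fun i j => A i j = true) (fun i _ => ?_)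
    (fun j _ i₁ h₁ i₂ h₂ => h.eq_of_adj_of_mem_leaves hq h₁.1 h₂.1 h₁.2 h₂.2)
  obtain ⟨j, hj⟩ := card_pos.mp (h.le_ldeg i)
  exact ⟨j, mem_univ j, by simpa using hj⟩

end Correcting

lemma two_mul_card_le_edges_add_card_leaves (hdeg : ∀ i, 1 ≤ ldeg A i) :
    2 * Fintype.card K ≤ edges A + #(leaves A) := by
  calc 2 * Fintype.card K = ∑ _i : K, 2 := by simp [mul_comm]
    _ ≤ ∑ i : K, (ldeg A i + if ldeg A i = 1 then 1 else 0) :=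
        sum_le_sum fun i _ => by have := hdeg i; split_ifs <;> omega
    _ = edges A + #(leaves A) := by rw [sum_add_distrib, leaves, card_filter]; rfl

end

/-- Over a binary alphabet, any 1-defect correcting design on `k` left vertices
with `E` edges and `m` right vertices satisfies `E ≥ 2k - m`. -/
theorem binary_t1_edge_bound {K M : Type*} [Fintype K] [Fintype M]
    (A : K → M → Bool) (h : Correcting 2 1 A) :
    2 * Fintype.card K ≤ edges A + Fintype.card M :=
  (two_mul_card_le_edges_add_card_leaves h.le_ldeg).trans
    (Nat.add_le_add_left (h.card_leaves_le one_lt_two) _)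
end

section
/- Over a binary alphabet, any 2-defect correcting design on k left vertices with E edges and m right vertices satisfies E >= 4k - m; equivalently E/(2k) >= 2 - m/(2k). -/
/-!
Fix a decoder `r` choosing, for each left coloring `c`, a correcting right coloring `r c`. A left
vertex of degree `< 2t` cannot have `t` neighbours agreeing with each of two different colors, so
its color is read off `r c`; a vertex of degree exactly `t` forces the color of all its
neighbours, and with two colors available these neighbourhoods are pairwise disjoint. Hence the
colorings of the vertices of degree `< 2t` inject into the colorings of the right vertices outside
those neighbourhoods times the colorings of the degree-`t` vertices. For `t = 2` this gives
`#{d < 4} + #{d = 2} ≤ m`, and summing `4 ≤ d + [d < 4] + [d = 2]` (every degree is at least 2)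
over the left vertices gives `4k ≤ E + m`.
-/

open Finset

section Decoder

variable {K M α : Type*} [Fintype M] (A : K → M → Bool)

def nbhd (i : K) : Finset M := {j | A i j}

def agreeSet [DecidableEq α] (r : M → α) (i : K) (a : α) : Finset M := {j | A i j ∧ r j = a}

def IsDecoder [DecidableEq α] (t : ℕ) (r : (K → α) → M → α) : Prop :=
  ∀ c i, t ≤ #(agreeSet A (r c) i (c i))

variable {A} [DecidableEq α]

theorem agreeSet_subset_nbhd {r : M → α} {i : K} {a : α} : agreeSet A r i a ⊆ nbhd A i :=
  monotone_filter_right univ fun _ _ => And.left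

variable [Fintype K]

section Agreement

variable {r : M → α} {i : K} {a b : α}

theorem apply_eq_of_ldeg_le_card_agreeSet (h : ldeg A i ≤ #(agreeSet A r i a)) {j : M}
    (hj : A i j) : r j = a := by
  have hj' : j ∈ nbhd A i := by simpa [nbhd] using hj
  rw [← eq_of_subset_of_card_le agreeSet_subset_nbhd h, agreeSet, mem_filter] at hj'
  exact hj'.2.2

theorem eq_of_ldeg_lt_card_agreeSet_add
    (h : ldeg A i < #(agreeSet A r i a) + #(agreeSet A r i b)) : a = b := by
  classical
  by_contra hab
  have hdisj : Disjoint (agreeSet A r i a) (agreeSet A r i b) :=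
    disjoint_filter.2 fun j _ hja hjb => hab (hja.2.symm.trans hjb.2)
  have hsub : agreeSet A r i a ∪ agreeSet A r i b ⊆ nbhd A i :=
    union_subset agreeSet_subset_nbhd agreeSet_subset_nbhd
  have := card_le_card hsub
  rw [card_union_of_disjoint hdisj] at this
  exact absurd h (not_lt.2 this)

end Agreement

theorem Correcting.exists_isDecoder {q t : ℕ} (h : Correcting q t A) :
    ∃ r : (K → Fin q) → M → Fin q, IsDecoder A t r :=
  ⟨fun c => (h c).choose, fun c => (h c).choose_spec⟩

namespace IsDecoder

variable {t : ℕ} {r : (K → α) → M → α}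

theorem le_ldeg [Nonempty α] (hr : IsDecoder A t r) (i : K) : t ≤ ldeg A i :=
  (hr (fun _ => Classical.arbitrary α) i).trans (card_le_card agreeSet_subset_nbhd)

theorem apply_eq_of_ldeg_eq (hr : IsDecoder A t r) (c : K → α) {i : K} (hi : ldeg A i = t)
    {j : M} (hj : A i j) : r c j = c i :=
  apply_eq_of_ldeg_le_card_agreeSet (hi ▸ hr c i) hj

theorem eq_of_apply_eq (hr : IsDecoder A t r) {c c' : K → α} (hc : r c = r c') {i : K}
    (hi : ldeg A i < 2 * t) : c i = c' i := by
  refine eq_of_ldeg_lt_card_agreeSet_add (A := A) (r := r c) (i := i) ?_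
  have := hr c' i
  rw [← hc] at this
  linarith [hr c i]

theorem disjoint_nbhd [Nontrivial α] (hr : IsDecoder A t r) {i i' : K} (hi : ldeg A i = t)
    (hi' : ldeg A i' = t) (hne : i ≠ i') : Disjoint (nbhd A i) (nbhd A i') := by
  classical
  obtain ⟨a, b, hab⟩ := exists_pair_ne α
  let c : K → α := fun x => if x = i then a else b
  refine disjoint_filter.2 fun j _ hj hj' => hab ?_
  have := (hr.apply_eq_of_ldeg_eq c hi hj).symm.trans (hr.apply_eq_of_ldeg_eq c hi' hj')
  simpa [c, hne.symm] using this

theorem apply_eq_apply (hr : IsDecoder A t r) {c c' : K → α}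
    (hK : ∀ i, ldeg A i = t → c i = c' i)
    (hM : ∀ j, (∀ i, ldeg A i = t → A i j = false) → r c j = r c' j) : r c = r c' := by
  funext j
  by_cases hj : ∃ i, ldeg A i = t ∧ A i j
  · obtain ⟨i, hi, hij⟩ := hj
    rw [hr.apply_eq_of_ldeg_eq c hi hij, hr.apply_eq_of_ldeg_eq c' hi hij, hK i hi]
  · exact hM j fun i hi => by simpa using fun h => hj ⟨i, hi, h⟩

variable [DecidableEq M] [Nontrivial α]

theorem card_biUnion_nbhd (hr : IsDecoder A t r) :
    #(({i | ldeg A i = t} : Finset K).biUnion (nbhd A)) = t * #{i | ldeg A i = t} := by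
  rw [card_biUnion fun i hi i' hi' hne =>
    hr.disjoint_nbhd (mem_filter.1 hi).2 (mem_filter.1 hi').2 hne]
  exact (sum_const_nat fun i hi => (mem_filter.1 hi).2).trans (mul_comm _ _)

theorem card_ldeg_lt_two_mul_le [Fintype α] (hr : IsDecoder A t r) (ht : 0 < t) :
    #{i | ldeg A i < 2 * t} ≤
      #(({i | ldeg A i = t} : Finset K).biUnion (nbhd A))ᶜ + #{i | ldeg A i = t} := by
  classical
  set S : Finset K := {i | ldeg A i < 2 * t}
  set T : Finset K := {i | ldeg A i = t}
  set P := T.biUnion (nbhd A)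
  have hTS : T ⊆ S := monotone_filter_right _ fun i _ (hi : ldeg A i = t) => by omega
  let extend (c : S → α) (i : K) : α :=
    if h : i ∈ S then c ⟨i, h⟩ else Classical.arbitrary α
  let F (c : S → α) : (↥Pᶜ → α) × (T → α) :=
    (fun j => r (extend c) j, fun i => c ⟨i, hTS i.2⟩)
  -- On `P` the decoded coloring is forced by `c` on `T`; off `P` it is recorded by `F`.
  have hF : Function.Injective F := by
    intro c c' hcc
    have hr_eq : r (extend c) = r (extend c') := hr.apply_eq_apply
      (fun i hi => by
        simpa [extend, hTS (mem_filter.2 ⟨mem_univ i, hi⟩)] using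
          congrFun (congrArg Prod.snd hcc) ⟨i, mem_filter.2 ⟨mem_univ i, hi⟩⟩)
      (fun j hj => congrFun (congrArg Prod.fst hcc) ⟨j, by simpa [P, T, nbhd] using hj⟩)
    funext i
    simpa only [extend, dif_pos i.2] using hr.eq_of_apply_eq hr_eq (mem_filter.1 i.2).2
  have := Fintype.card_le_of_injective F hF
  simp only [Fintype.card_fun, Fintype.card_prod, Fintype.card_coe, ← pow_add] at this
  exact (pow_le_pow_iff_right₀ Fintype.one_lt_card).1 this

theorem card_ldeg_lt_two_mul_add_le [Fintype α] (hr : IsDecoder A t r) (ht : 0 < t) :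
    #{i | ldeg A i < 2 * t} + t * #{i | ldeg A i = t} ≤
      Fintype.card M + #{i | ldeg A i = t} := by
  have hsmall := hr.card_ldeg_lt_two_mul_le ht
  have hP := card_le_univ (({i | ldeg A i = t} : Finset K).biUnion (nbhd A))
  rw [card_compl, hr.card_biUnion_nbhd] at hsmall
  rw [hr.card_biUnion_nbhd] at hP
  omega

end IsDecoder

end Decoder

/-- Over a binary alphabet, any 2-defect correcting design on `k` left vertices
with `E` edges and `m` right vertices satisfies `E ≥ 4k - m`, i.e.
`E/(2k) ≥ 2 - m/(2k)`. -/
theorem binary_t2_edge_bound {K M : Type*} [Fintype K] [Fintype M]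
    (A : K → M → Bool) (h : Correcting 2 2 A) :
    4 * Fintype.card K ≤ edges A + Fintype.card M := by
  classical
  obtain ⟨r, hr⟩ := h.exists_isDecoder
  have hcount := hr.card_ldeg_lt_two_mul_add_le two_pos
  have hpoint (i : K) :
      4 ≤ ldeg A i + ((if ldeg A i < 2 * 2 then 1 else 0) + if ldeg A i = 2 then 1 else 0) := by
    have := hr.le_ldeg i
    split_ifs <;> omega
  calc 4 * Fintype.card K = ∑ _i : K, 4 := by rw [sum_const, card_univ, smul_eq_mul, mul_comm]
    _ ≤ ∑ i, (ldeg A i +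
          ((if ldeg A i < 2 * 2 then 1 else 0) + if ldeg A i = 2 then 1 else 0)) :=
      sum_le_sum fun i _ => hpoint i
    _ = edges A + (#{i | ldeg A i < 2 * 2} + #{i | ldeg A i = 2}) := by
      rw [sum_add_distrib, sum_add_distrib, card_filter, card_filter, edges]
    _ ≤ edges A + Fintype.card M := by omega
end

section
/- Union bound step of the covering converse: in any t-defect correcting design over an alphabet of size q, for each fixed coloring r of the m right vertices, the number of left-vertex colorings w for which every left vertex has at least t same-colored right-neighbors under (w, r) is at most the product over left vertices v of floor(deg(v)/t). -/
open Finset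

/-!
A left coloring `w` qualifies exactly when each `w i` is a color that `r` gives to at least
`t` neighbours of `i`, so the qualifying colorings form a product of per-vertex color sets.
The neighbourhoods of `i` painted in distinct colors are disjoint, so at most `deg(i) / t`
colors qualify at `i`.
-/

namespace Finset

variable {α β : Type*} [Fintype β] [DecidableEq β]

theorem card_filter_le_card_fiber_mul_le_card (s : Finset α) (f : α → β) (t : ℕ) :
    #{b | t ≤ #{a ∈ s | f a = b}} * t ≤ #s := by
  set heavy : Finset β := {b | t ≤ #{a ∈ s | f a = b}}
  calc #heavy * t = ∑ _b ∈ heavy, t := by rw [sum_const, smul_eq_mul]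
    _ ≤ ∑ b ∈ heavy, #{a ∈ s | f a = b} := sum_le_sum fun b hb => (mem_filter.1 hb).2
    _ = #{a ∈ s | f a ∈ heavy} := sum_card_fiberwise_eq_card_filter s heavy f
    _ ≤ #s := card_filter_le s _

theorem card_filter_le_card_fiber_le_div_card (s : Finset α) (f : α → β) {t : ℕ}
    (ht : 1 ≤ t) : #{b | t ≤ #{a ∈ s | f a = b}} ≤ #s / t :=
  (Nat.le_div_iff_mul_le ht).2 (card_filter_le_card_fiber_mul_le_card s f t)

end Finset

theorem Fintype.card_filter_forall_eq_prod {ι : Type*} [Fintype ι] [DecidableEq ι]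
    {β : ι → Type*} [∀ i, Fintype (β i)]
    (P : ∀ i, β i → Prop) [∀ i, DecidablePred (P i)] :
    #{w : ∀ i, β i | ∀ i, P i (w i)} = ∏ i, #{b | P i b} := by
  rw [← Fintype.card_piFinset]
  congr 1
  ext w
  simp [Fintype.mem_piFinset]

theorem union_bound_step_general {K M : Type*} [Fintype K] [DecidableEq K] [Fintype M]
    {q t : ℕ} (ht : 1 ≤ t) (A : K → M → Bool)
    (r : M → Fin q) :
    (Finset.univ.filter (fun w : K → Fin q => ∀ i : K,
        t ≤ (Finset.univ.filter (fun j : M => A i j ∧ r j = w i)).card)).card ≤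
      ∏ i : K, ldeg A i / t := by
  calc _ = ∏ i, #{c : Fin q | t ≤ #{j | A i j ∧ r j = c}} :=
        Fintype.card_filter_forall_eq_prod _
    _ ≤ ∏ i, ldeg A i / t := by
      gcongr with i
      simpa only [filter_filter, ldeg] using
        card_filter_le_card_fiber_le_div_card (univ.filter (A i ·)) r ht

/-- Union bound step of the covering converse: in a `t`-defect correcting design,
for each fixed coloring `r` of the right vertices, the number of left colorings
`w` under which every left vertex has at least `t` same-colored right-neighbors
is at most `∏_v ⌊deg(v)/t⌋`. -/
theorem union_bound_step {K M : Type*} [Fintype K] [DecidableEq K] [Fintype M]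
    {q t : ℕ} (ht : 1 ≤ t) (A : K → M → Bool) (h : Correcting q t A)
    (r : M → Fin q) :
    (Finset.univ.filter (fun w : K → Fin q => ∀ i : K,
        t ≤ (Finset.univ.filter (fun j : M => A i j ∧ r j = w i)).card)).card ≤
      ∏ i : K, ldeg A i / t :=
  union_bound_step_general ht A r
end

section
/- Sampling-without-replacement coupling bound: fix a population of k colored balls with color composition k*P_X and s <= k. Let L be the color-count vector of s draws with replacement (multinomial distribution Mult(s, P_X)) and L' the color-count vector of s draws without replacement (multivariate hypergeometric distribution). Then the total variation distance between the laws of L and L' is at most s^2/(2k). -/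
open Finset
open scoped Nat

/-!
Let `c = k (k - 1) ⋯ (k - s + 1) / k ^ s` be the probability that `s` draws with replacement
from the `k` balls pick pairwise distinct balls. Conditioned on that event the colour counts are
hypergeometric, so `c · hypergeometric ≤ multinomial` pointwise, and two probability laws
related in this way differ by at most `1 - c` on every event. By the Weierstrass product
inequality, `1 - c ≤ ∑_{i < s} i / k = C(s, 2) / k ≤ s² / (2k)`.
-/

theorem Finset.sum_piAntidiag_prod_choose {ι : Type*} [DecidableEq ι] (s : Finset ι)
    (f : ι → ℕ) (n : ℕ) :
    ∑ l ∈ s.piAntidiag n, ∏ i ∈ s, (f i).choose (l i) = (∑ i ∈ s, f i).choose n := by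
  induction s using Finset.cons_induction generalizing n with
  | empty => cases n <;> simp
  | cons a s ha ih =>
    rw [piAntidiag_cons ha, sum_disjiUnion, sum_cons, Nat.add_choose_eq]
    refine sum_congr rfl fun p _ => ?_
    rw [sum_map, ← ih, mul_sum]
    refine sum_congr rfl fun l hl => ?_
    have hla : l a = 0 := by_contra fun h => ha ((mem_piAntidiag.1 hl).2 a h)
    rw [prod_cons]
    congr 1
    · simp [hla]
    · exact prod_congr rfl fun i hi => by simp [show i ≠ a from fun h => ha (h ▸ hi)]

theorem Finset.one_sub_sum_le_prod_one_sub {ι R : Type*} [CommRing R] [LinearOrder R]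
    [IsStrictOrderedRing R] (s : Finset ι) {f : ι → R} (h0 : ∀ i ∈ s, 0 ≤ f i)
    (h1 : ∀ i ∈ s, f i ≤ 1) : 1 - ∑ i ∈ s, f i ≤ ∏ i ∈ s, (1 - f i) := by
  induction s using Finset.cons_induction with
  | empty => simp
  | cons a s ha ih =>
    simp only [mem_cons, forall_eq_or_imp] at h0 h1
    rw [sum_cons, prod_cons]
    have hsum : 0 ≤ ∑ i ∈ s, f i := sum_nonneg h0.2
    nlinarith [mul_le_mul_of_nonneg_left (ih h0.2 h1.2) (sub_nonneg.2 h1.1), mul_nonneg h0.1 hsum]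

theorem Nat.one_sub_descFactorial_div_pow_le {k s : ℕ} (hs : s ≤ k) :
    1 - (k.descFactorial s : ℝ) / k ^ s ≤ s.choose 2 / k := by
  obtain rfl | hk := eq_or_ne k 0
  · simp [Nat.le_zero.1 hs]
  have hratio : (k.descFactorial s : ℝ) / k ^ s = ∏ i ∈ range s, (1 - (i : ℝ) / k) := by
    rw [descFactorial_eq_prod_range, ← prod_range_natCast_sub, ← card_range s, ← prod_const,
      card_range, ← prod_div_distrib]
    exact prod_congr rfl fun i _ => by rw [sub_div, div_self (by exact_mod_cast hk)]
  have hsum : ∑ i ∈ range s, (i : ℝ) / k = s.choose 2 / k := by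
    rw [← sum_div, choose_two_right, ← sum_range_id, cast_sum]
  rw [hratio, ← hsum, sub_le_comm]
  refine one_sub_sum_le_prod_one_sub _ (fun i _ => by positivity) fun i hi => ?_
  exact div_le_one_of_le₀ (by exact_mod_cast (mem_range.1 hi).le.trans hs) (cast_nonneg k)

theorem Nat.factorial_mul_prod_choose_le_multinomial_mul_prod_pow {ι : Type*} (s : Finset ι)
    (π l : ι → ℕ) :
    (∑ i ∈ s, l i)! * ∏ i ∈ s, (π i).choose (l i) ≤ multinomial s l * ∏ i ∈ s, π i ^ l i :=
  calc (∑ i ∈ s, l i)! * ∏ i ∈ s, (π i).choose (l i)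
      = multinomial s l * ∏ i ∈ s, (π i).descFactorial (l i) := by
        simp only [← multinomial_spec, descFactorial_eq_factorial_mul_choose, prod_mul_distrib]
        ring
    _ ≤ multinomial s l * ∏ i ∈ s, π i ^ l i :=
        Nat.mul_le_mul_left _ (prod_le_prod' fun i _ => descFactorial_le_pow _ _)

theorem abs_sum_sub_le_one_sub_of_mul_le {ι : Type*} {S F : Finset ι} {p q : ι → ℝ} {c : ℝ}
    (hFS : F ⊆ S) (hp : ∑ i ∈ S, p i = 1) (hq : ∑ i ∈ S, q i = 1) (hq0 : ∀ i ∈ S, 0 ≤ q i)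
    (hc : c ≤ 1) (hcq : ∀ i ∈ S, c * q i ≤ p i) : |∑ i ∈ F, (p i - q i)| ≤ 1 - c := by
  have hQ1 : ∑ i ∈ F, q i ≤ 1 := hq ▸ sum_le_sum_of_subset_of_nonneg hFS fun i hi _ => hq0 i hi
  have hQ0 : 0 ≤ ∑ i ∈ F, q i := sum_nonneg fun i hi => hq0 i (hFS hi)
  have hcQP : c * ∑ i ∈ F, q i ≤ ∑ i ∈ F, p i :=
    mul_sum F q c ▸ sum_le_sum fun i hi => hcq i (hFS hi)
  have hPcQ : ∑ i ∈ F, (p i - c * q i) ≤ 1 - c := by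
    calc ∑ i ∈ F, (p i - c * q i) ≤ ∑ i ∈ S, (p i - c * q i) :=
          sum_le_sum_of_subset_of_nonneg hFS fun i hi _ => sub_nonneg.2 (hcq i hi)
      _ = 1 - c := by rw [sum_sub_distrib, ← mul_sum, hp, hq, mul_one]
  rw [sum_sub_distrib, ← mul_sum] at hPcQ
  rw [sum_sub_distrib, abs_le]
  constructor <;> nlinarith

section Urn

variable {ι : Type*} [Fintype ι]

-- Colour `j` has `π j` balls; `hypergeometricMass π s l` is a probability only when `∑ j, l j = s`.
noncomputable def multinomialMass (π l : ι → ℕ) : ℝ :=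
  (Nat.multinomial univ l : ℝ) * ∏ j, ((π j : ℝ) / (∑ i, π i : ℕ)) ^ l j

noncomputable def hypergeometricMass (π : ι → ℕ) (s : ℕ) (l : ι → ℕ) : ℝ :=
  (∏ j, ((π j).choose (l j) : ℝ)) / ((∑ i, π i).choose s : ℕ)

variable (π : ι → ℕ)

theorem sum_multinomialMass [DecidableEq ι] (hπ : ∑ i, π i ≠ 0) (s : ℕ) :
    ∑ l ∈ univ.piAntidiag s, multinomialMass π l = 1 := by
  have hone : ∑ j, (π j : ℝ) / (∑ i, π i : ℕ) = 1 := by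
    rw [← sum_div, ← Nat.cast_sum, div_self (by exact_mod_cast hπ)]
  have h := sum_pow_eq_sum_piAntidiag univ (fun j => (π j : ℝ) / (∑ i, π i : ℕ)) s
  rw [hone, one_pow] at h
  exact h.symm

theorem sum_hypergeometricMass [DecidableEq ι] {s : ℕ} (hs : s ≤ ∑ i, π i) :
    ∑ l ∈ univ.piAntidiag s, hypergeometricMass π s l = 1 := by
  have hchoose : ((∑ i, π i).choose s : ℝ) ≠ 0 := by exact_mod_cast (Nat.choose_pos hs).ne'
  simp only [hypergeometricMass, ← sum_div]
  rw [← sum_piAntidiag_prod_choose] at hchoose ⊢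
  push_cast at hchoose ⊢
  exact div_self hchoose

theorem descFactorial_div_pow_mul_hypergeometricMass_le {s : ℕ} {l : ι → ℕ}
    (hl : ∑ i, l i = s) :
    ((∑ i, π i).descFactorial s : ℝ) / (∑ i, π i : ℕ) ^ s * hypergeometricMass π s l
      ≤ multinomialMass π l := by
  set k := ∑ i, π i
  have hcount := Nat.factorial_mul_prod_choose_le_multinomial_mul_prod_pow univ π l
  rw [hl] at hcount
  calc (k.descFactorial s : ℝ) / k ^ s * hypergeometricMass π s l
      = (s ! * ∏ j, ((π j).choose (l j) : ℝ)) / k ^ s * ((k.choose s : ℝ) / k.choose s) := by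
        rw [hypergeometricMass, Nat.descFactorial_eq_factorial_mul_choose]
        push_cast
        ring
    _ ≤ (s ! * ∏ j, ((π j).choose (l j) : ℝ)) / k ^ s := mul_le_of_le_one_right (by positivity)
        (div_self_le_one _)
    _ ≤ (Nat.multinomial univ l * ∏ j, (π j : ℝ) ^ l j) / k ^ s :=
        div_le_div_of_nonneg_right (by exact_mod_cast hcount) (by positivity)
    _ = multinomialMass π l := by
        simp only [multinomialMass, div_pow]
        rw [prod_div_distrib, prod_pow_eq_pow_sum, hl, mul_div_assoc]

end Urn

/-- Coupling bound for sampling with vs. without replacement.  The population has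
`k` balls of `q` colors with composition `π` (so `P_X j = π j / k`).  For `s ≤ k`
draws, the multinomial law of the color counts (with replacement) and the
multivariate hypergeometric law (without replacement) differ in total variation
by at most `s²/(2k)`; total variation is expressed in its sup-over-events form:
for every event (finite set of count vectors summing to `s`) the probabilities
differ by at most `s²/(2k)`. -/
theorem multinomial_hypergeometric_tv (q k s : ℕ) (hk : 1 ≤ k) (hs : s ≤ k)
    (π : Fin q → ℕ) (hπ : ∑ j, π j = k)
    (F : Finset (Fin q → ℕ)) (hF : ∀ l ∈ F, ∑ j, l j = s) :
    |∑ l ∈ F,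
        ((Nat.multinomial Finset.univ l : ℝ) * ∏ j, ((π j : ℝ) / k) ^ (l j)
          - (∏ j, ((π j).choose (l j) : ℝ)) / (k.choose s))| ≤
      (s : ℝ) ^ 2 / (2 * k) := by
  subst hπ
  set k := ∑ j, π j
  have hFS : F ⊆ univ.piAntidiag s :=
    fun l hl => mem_piAntidiag.2 ⟨hF l hl, fun i _ => mem_univ i⟩
  have hc : (k.descFactorial s : ℝ) / k ^ s ≤ 1 :=
    div_le_one_of_le₀ (by exact_mod_cast k.descFactorial_le_pow s) (by positivity)
  calc |∑ l ∈ F, (multinomialMass π l - hypergeometricMass π s l)|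
      ≤ 1 - (k.descFactorial s : ℝ) / k ^ s :=
        abs_sum_sub_le_one_sub_of_mul_le hFS (sum_multinomialMass π (by omega) s)
          (sum_hypergeometricMass π hs) (fun l _ => by unfold hypergeometricMass; positivity) hc
          fun l hl => descFactorial_div_pow_mul_hypergeometricMass_le π (mem_piAntidiag.1 hl).1
    _ ≤ s.choose 2 / k := Nat.one_sub_descFactorial_div_pow_le hs
    _ ≤ (s : ℝ) ^ 2 / 2 / k := by
        gcongr
        simpa using Nat.choose_le_pow_div (α := ℝ) 2 s
    _ = (s : ℝ) ^ 2 / (2 * k) := div_div _ _ _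
end
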